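/- arXiv:math/0609330 — 2 statements merged into one kernel-verified Lean document; each statement's English description precedes it below -/
import Mathlib

section
/- Let μ = (1/3)(δ_{-1} + δ_0 + δ_1). There is no stopping time τ with respect to the natural filtration of the simple symmetric random walk such that τ<∞ a.s., X_τ has law μ, and the stopped process (X_{n∧τ})_{n≥0} is a uniformly integrable martingale. In particular, the set M_0^{UI} is a proper subset of the set of all centered probability measures on ℤ. -/
/-!
For a UI stopping time, `X_{n ∧ τ} = E[X_τ | F_n]`; so if `X_τ ∈ {-1, 0, 1}`, the stopped walk
never leaves `[-1, 1]`. The event `{τ ≤ 1}` lies in `F_1 = σ(ξ_1)`, and on its complement the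
second step repeats the first with probability `1/2`, independently of `ξ_1`, which would
carry the walk to `±2`; hence `τ ≤ 1` a.s. Then `X_τ = 0` exactly where `τ = 0`, an event of the
trivial `σ`-algebra `F_0`, so `P(X_τ = 0) ∈ {0, 1}`, whereas the target law gives `0` mass `1/3`.
On the other hand, every UI embedding has mean `E[X_τ] = E[X_0] = 0`.
-/

open MeasureTheory ProbabilityTheory Filter Set
open scoped ENNReal NNReal Topology

noncomputable section

namespace RWSkorokhod

variable {Ω : Type*} [MeasurableSpace Ω]

/-- The simple symmetric random walk `X n = ξ 1 + ⋯ + ξ n` built from the steps `ξ`. -/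
def walk (ξ : ℕ → Ω → ℤ) (n : ℕ) (ω : Ω) : ℤ :=
  ∑ k ∈ Finset.Icc 1 n, ξ k ω

/-- `ξ` is a sequence of i.i.d. symmetric `±1` steps under the probability measure `P`. -/
structure IsSSRW (P : Measure Ω) (ξ : ℕ → Ω → ℤ) : Prop where
  isProb : IsProbabilityMeasure P
  meas : ∀ k, Measurable (ξ k)
  indep : iIndepFun ξ P
  up : ∀ k, P {ω | ξ k ω = 1} = 1 / 2
  down : ∀ k, P {ω | ξ k ω = -1} = 1 / 2

lemma measurable_walk (ξ : ℕ → Ω → ℤ) (hm : ∀ k, Measurable (ξ k)) (n : ℕ) :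
    Measurable (walk ξ n) :=
  Finset.measurable_sum _ fun k _ => hm k

/-- The natural filtration of the random walk: `F n = σ(X 0, …, X n)`. -/
def natFilt (ξ : ℕ → Ω → ℤ) (hm : ∀ k, Measurable (ξ k)) :
    Filtration ℕ ‹MeasurableSpace Ω› where
  seq n := ⨆ k ∈ Set.Iic n, MeasurableSpace.comap (walk ξ k) inferInstance
  mono' i _ hij := biSup_mono fun k (hk : k ∈ Set.Iic i) => le_trans hk hij
  le' _ := iSup₂_le fun k _ => (measurable_walk ξ hm k).comap_le

/-- `τ` is an (extended-natural-number valued) stopping time for the filtration `F`. -/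
def IsStop (F : Filtration ℕ ‹MeasurableSpace Ω›) (τ : Ω → ℕ∞) : Prop :=
  ∀ n : ℕ, MeasurableSet[F n] {ω | τ ω ≤ (n : ℕ∞)}

/-- `τ` is almost surely finite. -/
def AEFinite (P : Measure Ω) (τ : Ω → ℕ∞) : Prop :=
  ∀ᵐ ω ∂P, τ ω < ⊤

/-- The value `X_τ` of the walk at the stopping time `τ` (junk on `{τ = ∞}`). -/
def stopVal (ξ : ℕ → Ω → ℤ) (τ : Ω → ℕ∞) (ω : Ω) : ℤ :=
  walk ξ (τ ω).toNat ω

/-- The stopped process `X_{n ∧ τ}`, viewed as a real-valued process. -/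
def stopProc (ξ : ℕ → Ω → ℤ) (τ : Ω → ℕ∞) (n : ℕ) (ω : Ω) : ℝ :=
  ((walk ξ (min (n : ℕ∞) (τ ω)).toNat ω : ℤ) : ℝ)

/-- `τ` embeds the measure `μ` : the law of `X_τ` under `P` is `μ`. -/
def Embeds (P : Measure Ω) (ξ : ℕ → Ω → ℤ) (τ : Ω → ℕ∞) (μ : Measure ℤ) : Prop :=
  Measure.map (stopVal ξ τ) P = μ

/-- `τ` is a UI stopping time: an a.s. finite stopping time of the natural filtration such
that the stopped process `(X_{n ∧ τ})` is a uniformly integrable martingale. -/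
def IsUIStop (P : Measure Ω) (ξ : ℕ → Ω → ℤ) (hm : ∀ k, Measurable (ξ k))
    (τ : Ω → ℕ∞) : Prop :=
  IsStop (natFilt ξ hm) τ ∧ AEFinite P τ ∧
    Martingale (stopProc ξ τ) (natFilt ξ hm) P ∧
    UniformIntegrable (stopProc ξ τ) 1 P

/-- The set `M₀^UI` of probability measures on `ℤ` which can be embedded in the random
walk by a UI stopping time of its natural filtration. -/
def MUI (P : Measure Ω) (ξ : ℕ → Ω → ℤ) (hm : ∀ k, Measurable (ξ k)) : Set (Measure ℤ) :=
  {μ | ∃ τ : Ω → ℕ∞, IsUIStop P ξ hm τ ∧ Embeds P ξ τ μ}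

/-- A centered probability measure on `ℤ`: finite first moment and mean zero. -/
def Centered (μ : Measure ℤ) : Prop :=
  IsProbabilityMeasure μ ∧ Integrable (fun n : ℤ => (n : ℝ)) μ ∧
    (∫ n : ℤ, (n : ℝ) ∂μ) = 0

/-- `τ` is a minimal stopping time: any stopping time `σ ≤ τ` a.s. with `X_σ ∼ X_τ`
equals `τ` a.s. -/
def Minimal (P : Measure Ω) (ξ : ℕ → Ω → ℤ) (hm : ∀ k, Measurable (ξ k))
    (τ : Ω → ℕ∞) : Prop :=
  ∀ σ : Ω → ℕ∞, IsStop (natFilt ξ hm) σ → (∀ᵐ ω ∂P, σ ω ≤ τ ω) →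
    Measure.map (stopVal ξ σ) P = Measure.map (stopVal ξ τ) P → σ =ᵐ[P] τ

/-- The measure `μ_p = p δ₀ + ((1-p)/2)(δ₋₂ + δ₂)` on `ℤ`. -/
def muP (p : ℝ) : Measure ℤ :=
  ENNReal.ofReal p • Measure.dirac 0 +
    ENNReal.ofReal ((1 - p) / 2) • (Measure.dirac (-2) + Measure.dirac 2)

/-- The set `S` of `p ∈ [0,1]` such that `μ_p` admits a UI embedding. -/
def Sset (P : Measure Ω) (ξ : ℕ → Ω → ℤ) (hm : ∀ k, Measurable (ξ k)) : Set ℝ :=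
  {p | p ∈ Set.Icc (0 : ℝ) 1 ∧ muP p ∈ MUI P ξ hm}

/-- The exit time `H_N = inf {n : X n ∉ [-N, N]}`. -/
def exitTime (ξ : ℕ → Ω → ℤ) (N : ℕ) (ω : Ω) : ℕ∞ :=
  ⨅ (n : ℕ) (_ : walk ξ n ω ∉ Set.Icc (-(N : ℤ)) (N : ℤ)), (n : ℕ∞)

omit [MeasurableSpace Ω] in
@[simp] lemma walk_zero (ξ : ℕ → Ω → ℤ) : walk ξ 0 = fun _ => 0 := by
  ext; simp [walk]

omit [MeasurableSpace Ω] in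
@[simp] lemma walk_one (ξ : ℕ → Ω → ℤ) : walk ξ 1 = ξ 1 := by
  ext; simp [walk]

omit [MeasurableSpace Ω] in
lemma walk_two (ξ : ℕ → Ω → ℤ) (ω : Ω) : walk ξ 2 ω = ξ 1 ω + ξ 2 ω := by
  rw [walk, Finset.sum_Icc_succ_top (by norm_num)]
  simp

lemma natFilt_zero (ξ : ℕ → Ω → ℤ) (hm : ∀ k, Measurable (ξ k)) : natFilt ξ hm 0 = ⊥ := by
  simp [natFilt]

lemma natFilt_one (ξ : ℕ → Ω → ℤ) (hm : ∀ k, Measurable (ξ k)) :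
    natFilt ξ hm 1 = MeasurableSpace.comap (ξ 1) inferInstance := by
  have hIic : Set.Iic 1 = ({0, 1} : Set ℕ) := by
    ext k; simp [Nat.le_one_iff_eq_zero_or_eq_one]
  change (⨆ k ∈ Set.Iic 1, _) = _
  rw [hIic, iSup_insert, iSup_singleton]
  simp

/- `ℕ∞` and `WithTop ℕ` carry different (both discrete) measurable structures, so Mathlib's
`IsStoppingTime.measurable'` only gives measurability of `τ` into `WithTop ℕ`. -/
lemma IsStop.measurable {F : Filtration ℕ ‹MeasurableSpace Ω›} {τ : Ω → ℕ∞} (hτ : IsStop F τ) :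
    Measurable τ :=
  measurable_to_countable' fun x =>
    IsStoppingTime.measurable' (f := F) hτ (measurableSet_singleton (α := WithTop ℕ) x)

lemma measurable_stopVal {ξ : ℕ → Ω → ℤ} (hm : ∀ k, Measurable (ξ k)) {τ : Ω → ℕ∞}
    (hτ : Measurable τ) : Measurable (stopVal ξ τ) := by
  have hwalk : Measurable fun p : Ω × ℕ => walk ξ p.2 p.1 :=
    measurable_from_prod_countable_left fun n => measurable_walk ξ hm n
  exact hwalk.comp (measurable_id.prodMk ((measurable_of_countable ENat.toNat).comp hτ))

omit [MeasurableSpace Ω] in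
lemma stopProc_of_le (ξ : ℕ → Ω → ℤ) {τ : Ω → ℕ∞} {n : ℕ} {ω : Ω} (h : (n : ℕ∞) ≤ τ ω) :
    stopProc ξ τ n ω = walk ξ n ω := by
  simp [stopProc, min_eq_left h]

lemma _root_.ProbabilityTheory.IndepFun.measure_preimage_eq_zero_of_inter {β γ : Type*}
    [MeasurableSpace β] [MeasurableSpace γ] {P : Measure Ω} {f : Ω → β} {g : Ω → γ}
    (hfg : IndepFun f g P) {s : Set β} {t : Set γ} (hs : MeasurableSet s) (ht : MeasurableSet t)
    (hst : P (f ⁻¹' s ∩ g ⁻¹' t) = 0) (ht₀ : P (g ⁻¹' t) ≠ 0) : P (f ⁻¹' s) = 0 := by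
  rw [hfg.measure_inter_preimage_eq_mul s t hs ht] at hst
  exact (mul_eq_zero.1 hst).resolve_right ht₀

namespace IsSSRW

variable {P : Measure Ω} {ξ : ℕ → Ω → ℤ}

lemma measure_step_eq (W : IsSSRW P ξ) (k : ℕ) {z : ℤ} (hz : z = 1 ∨ z = -1) :
    P (ξ k ⁻¹' {z}) = 1 / 2 := by
  rcases hz with rfl | rfl
  · exact W.up k
  · exact W.down k

lemma ae_step_eq (W : IsSSRW P ξ) (k : ℕ) : ∀ᵐ ω ∂P, ξ k ω = 1 ∨ ξ k ω = -1 := by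
  have hprob := W.isProb
  have hdisj : Disjoint (ξ k ⁻¹' {1}) (ξ k ⁻¹' {-1}) :=
    (Set.disjoint_singleton.2 (by norm_num)).preimage _
  have hunion : P (ξ k ⁻¹' {1} ∪ ξ k ⁻¹' {-1}) = 1 := by
    rw [measure_union hdisj (W.meas k (measurableSet_singleton _)),
      W.measure_step_eq k (.inl rfl), W.measure_step_eq k (.inr rfl), ENNReal.add_halves]
  exact (ae_iff_measure_eq ((W.meas k (.singleton _)).union
    (W.meas k (.singleton _))).nullMeasurableSet).2 (hunion.trans measure_univ.symm)

end IsSSRW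

section UI

variable {P : Measure Ω} {ξ : ℕ → Ω → ℤ} {hm : ∀ k, Measurable (ξ k)} {τ : Ω → ℕ∞}

omit [MeasurableSpace Ω] in
lemma tendsto_stopProc (ξ : ℕ → Ω → ℤ) {ω : Ω} (hω : τ ω < ⊤) :
    Tendsto (fun n => stopProc ξ τ n ω) atTop (𝓝 (stopVal ξ τ ω : ℝ)) := by
  obtain ⟨m, hm⟩ := WithTop.ne_top_iff_exists.1 hω.ne
  refine tendsto_atTop_of_eventually_const (i₀ := m) fun n hn => ?_
  have hmin : min (n : ℕ∞) (τ ω) = τ ω := min_eq_right (hm ▸ Nat.cast_le.2 hn)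
  simp only [stopProc, stopVal, hmin]

lemma IsUIStop.stopVal_ae_eq_limit [IsFiniteMeasure P] (h : IsUIStop P ξ hm τ) :
    (fun ω => (stopVal ξ τ ω : ℝ)) =ᵐ[P]
      Filtration.limitProcess (stopProc ξ τ) (natFilt ξ hm) P := by
  obtain ⟨-, hfin, hmart, hui⟩ := h
  filter_upwards [hfin, hmart.submartingale.ae_tendsto_limitProcess_of_uniformIntegrable hui]
    with ω hω hlim using tendsto_nhds_unique (tendsto_stopProc ξ hω) hlim

lemma IsUIStop.integrable_stopVal [IsFiniteMeasure P] (h : IsUIStop P ξ hm τ) :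
    Integrable (fun ω => (stopVal ξ τ ω : ℝ)) P := by
  have hlim := h.stopVal_ae_eq_limit
  obtain ⟨-, -, hmart, hui⟩ := h
  obtain ⟨C, hC⟩ := hui.2.2
  exact ((hmart.submartingale.memLp_limitProcess hC).integrable le_rfl).congr hlim.symm

lemma IsUIStop.stopProc_ae_eq_condExp [IsFiniteMeasure P] (h : IsUIStop P ξ hm τ) (n : ℕ) :
    stopProc ξ τ n =ᵐ[P] P[fun ω => (stopVal ξ τ ω : ℝ) | natFilt ξ hm n] := by
  have hlim := h.stopVal_ae_eq_limit
  obtain ⟨-, -, hmart, hui⟩ := h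
  exact (hmart.ae_eq_condExp_limitProcess hui n).trans (condExp_congr_ae hlim.symm)

lemma IsUIStop.integral_stopVal [IsFiniteMeasure P] (h : IsUIStop P ξ hm τ) :
    ∫ ω, (stopVal ξ τ ω : ℝ) ∂P = 0 := by
  have h0 := integral_congr_ae (h.stopProc_ae_eq_condExp 0)
  rw [integral_condExp ((natFilt ξ hm).le 0)] at h0
  simpa [stopProc] using h0.symm

lemma IsUIStop.ae_abs_stopProc_le [IsFiniteMeasure P] (h : IsUIStop P ξ hm τ) {R : ℝ}
    (hR : ∀ᵐ ω ∂P, |(stopVal ξ τ ω : ℝ)| ≤ R) (n : ℕ) : ∀ᵐ ω ∂P, |stopProc ξ τ n ω| ≤ R := by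
  filter_upwards [h.stopProc_ae_eq_condExp n, ae_bdd_abs_condExp_of_ae_bdd_abs hR]
    with ω hω hbdd
  rwa [hω]

lemma IsUIStop.centered [IsProbabilityMeasure P] (h : IsUIStop P ξ hm τ) :
    Centered (P.map (stopVal ξ τ)) := by
  have hX := measurable_stopVal hm h.1.measurable
  have hcast : Measurable fun n : ℤ => (n : ℝ) := measurable_of_countable _
  refine ⟨Measure.isProbabilityMeasure_map hX.aemeasurable, ?_, ?_⟩
  · exact (integrable_map_measure hcast.aestronglyMeasurable hX.aemeasurable).2
      h.integrable_stopVal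
  · rw [integral_map hX.aemeasurable hcast.aestronglyMeasurable]
    exact h.integral_stopVal

end UI

section Walk

variable {P : Measure Ω} {ξ : ℕ → Ω → ℤ} {τ : Ω → ℕ∞}

lemma ae_le_one_of_ae_abs_stopProc_two_le_one (W : IsSSRW P ξ)
    (hτ : IsStop (natFilt ξ W.meas) τ) (h2 : ∀ᵐ ω ∂P, |stopProc ξ τ 2 ω| ≤ 1) :
    ∀ᵐ ω ∂P, τ ω ≤ 1 := by
  obtain ⟨S, -, hS⟩ : ∃ S, MeasurableSet S ∧ ξ 1 ⁻¹' S = {ω | τ ω ≤ (1 : ℕ)} := by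
    have h1 := hτ 1
    rw [natFilt_one] at h1
    exact h1
  have hmemS (ω : Ω) : ξ 1 ω ∈ S ↔ τ ω ≤ 1 := by simpa using Set.ext_iff.1 hS ω
  -- On `{τ > 1}` a second step equal to the first, independent of `ξ 1`, reaches `±2`.
  have hnull (z : ℤ) (hz : z = 1 ∨ z = -1) : P (ξ 1 ⁻¹' (Sᶜ ∩ {z})) = 0 := by
    refine (W.indep.indepFun (by norm_num : (1 : ℕ) ≠ 2)).measure_preimage_eq_zero_of_inter
      (.of_discrete) (.singleton z) (measure_mono_null ?_ (ae_iff.1 h2)) ?_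
    · rintro ω ⟨⟨hSω, hz₁⟩, hz₂⟩
      have hτω : ((2 : ℕ) : ℕ∞) ≤ τ ω :=
        Order.add_one_le_of_lt (lt_of_not_ge fun h => hSω ((hmemS ω).2 h))
      simp only [mem_ofPred_eq, stopProc_of_le ξ hτω, walk_two,
        mem_singleton_iff.1 hz₁, mem_singleton_iff.1 hz₂]
      rcases hz with rfl | rfl <;> norm_num
    · simp [W.measure_step_eq 2 hz]
  filter_upwards [W.ae_step_eq 1, measure_eq_zero_iff_ae_notMem.1 (hnull 1 (.inl rfl)),
    measure_eq_zero_iff_ae_notMem.1 (hnull (-1) (.inr rfl))] with ω hξ h₁ hneg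
  by_contra hτω
  have hSω : ξ 1 ω ∈ Sᶜ := fun h => hτω ((hmemS ω).1 h)
  rcases hξ with h | h
  exacts [h₁ ⟨hSω, h⟩, hneg ⟨hSω, h⟩]

lemma measure_stopVal_preimage_zero_eq_zero_or_one (W : IsSSRW P ξ)
    (hτ : IsStop (natFilt ξ W.meas) τ) (h1 : ∀ᵐ ω ∂P, τ ω ≤ 1) :
    P (stopVal ξ τ ⁻¹' {0}) = 0 ∨ P (stopVal ξ τ ⁻¹' {0}) = 1 := by
  have hprob := W.isProb
  have h0 : {ω | τ ω = 0} = ∅ ∨ {ω | τ ω = 0} = univ := by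
    have h0 := hτ 0
    rw [natFilt_zero] at h0
    exact MeasurableSpace.measurableSet_bot_iff.1 (by simpa using h0)
  have hae : stopVal ξ τ ⁻¹' {0} =ᵐ[P] {ω | τ ω = 0} := by
    filter_upwards [h1, W.ae_step_eq 1] with ω hτ1 hξ
    refine propext (show stopVal ξ τ ω = 0 ↔ τ ω = 0 from ?_)
    rcases Order.le_one_iff.1 hτ1 with h | h <;> rcases hξ with hξ | hξ <;>
      simp [stopVal, h, hξ]
  rw [measure_congr hae]
  rcases h0 with h | h <;> simp [h]

end Walk

def threePointUniform : Measure ℤ :=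
  (1 / 3 : ℝ≥0∞) • (Measure.dirac (-1) + Measure.dirac 0 + Measure.dirac 1)

lemma threePointUniform_singleton_zero : threePointUniform {0} = 1 / 3 := by
  simp [threePointUniform]

lemma ae_abs_le_one_threePointUniform : ∀ᵐ n : ℤ ∂threePointUniform, |(n : ℝ)| ≤ 1 := by
  simp [threePointUniform, ae_add_measure_iff]

lemma centered_threePointUniform : Centered threePointUniform := by
  have hdirac (a : ℤ) : Integrable (fun n : ℤ => (n : ℝ)) (Measure.dirac a) :=
    (integrable_const (a : ℝ)).congr (ae_eq_dirac _).symm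
  have hsum := ((hdirac (-1)).add_measure (hdirac 0)).add_measure (hdirac 1)
  refine ⟨⟨?_⟩, hsum.smul_measure (by simp), ?_⟩
  · simp [threePointUniform, ENNReal.inv_three_add_inv_three]
  · rw [threePointUniform, integral_smul_measure,
      integral_add_measure ((hdirac (-1)).add_measure (hdirac 0)) (hdirac 1),
      integral_add_measure (hdirac (-1)) (hdirac 0)]
    simp

/-- The centered measure `μ = (1/3)(δ₋₁ + δ₀ + δ₁)` admits no UI
embedding into the simple symmetric random walk; in particular `M₀^UI` is a proper
subset of the set of centered probability measures on `ℤ`. -/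
theorem no_ui_embedding_third_third_third
    {Ω : Type*} [MeasurableSpace Ω] (P : Measure Ω) (ξ : ℕ → Ω → ℤ)
    (W : IsSSRW P ξ) :
    (¬ ∃ τ : Ω → ℕ∞, IsUIStop P ξ W.meas τ ∧
        Embeds P ξ τ ((1 / 3 : ℝ≥0∞) •
          (Measure.dirac (-1 : ℤ) + Measure.dirac 0 + Measure.dirac 1))) ∧
      MUI P ξ W.meas ⊂ {μ : Measure ℤ | Centered μ} := by
  have hprob := W.isProb
  have hnot : threePointUniform ∉ MUI P ξ W.meas := by
    rintro ⟨τ, hUI, hEmb⟩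
    have hX := measurable_stopVal W.meas hUI.1.measurable
    have hbdd : ∀ᵐ ω ∂P, |(stopVal ξ τ ω : ℝ)| ≤ 1 :=
      ae_of_ae_map hX.aemeasurable (hEmb ▸ ae_abs_le_one_threePointUniform)
    have hτ := ae_le_one_of_ae_abs_stopProc_two_le_one W hUI.1 (hUI.ae_abs_stopProc_le hbdd 2)
    have hP0 : P (stopVal ξ τ ⁻¹' {0}) = 1 / 3 := by
      rw [← Measure.map_apply hX (.singleton 0), hEmb, threePointUniform_singleton_zero]
    rcases measure_stopVal_preimage_zero_eq_zero_or_one W hUI.1 hτ with h | h <;>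
      rw [hP0] at h <;> norm_num at h
  refine ⟨hnot, (Set.ssubset_iff_of_subset ?_).2 ⟨_, centered_threePointUniform, hnot⟩⟩
  rintro _ ⟨τ, hUI, rfl⟩
  exact hUI.centered

end RWSkorokhod
end
end

section
/- If τ is an a.s. finite stopping time with respect to the natural filtration of the simple symmetric random walk such that the stopped process (X_{n∧τ})_{n≥0} is a uniformly integrable martingale, then τ is minimal. -/
/-!
Write `X` for the walk. The uniformly integrable martingale `X_{n ∧ τ}` is closed by its a.s. limit
`X_τ`, so `X_{n ∧ τ} = 𝔼[X_τ | 𝓕_n]`, and optional sampling at the bounded times `ρ ∧ n` gives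
`X_{ρ ∧ τ} = 𝔼[X_τ | 𝓕_ρ]` for every a.s. finite stopping time `ρ`.

Let `σ ≤ τ` with `X_σ ∼ X_τ`. For an integer `a`, conditional Jensen gives
`|X_σ - a| ≤ 𝔼[|X_τ - a| | 𝓕_σ]`; both sides have the same mean, so this is an equality and
`X_τ = a` on `{X_σ = a}`. Hence `X_σ = X_τ`, and sampling at `σ + 1` yields
`X_{(σ + 1) ∧ τ} = 𝔼[X_σ | 𝓕_{σ + 1}] = X_σ`. On `{σ < τ}` this is impossible, since the walk moves
by `±1` between the times `σ` and `σ + 1`.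
-/

open MeasureTheory ProbabilityTheory Filter Set
open scoped ENNReal NNReal Topology

noncomputable section

namespace MeasureTheory

variable {Ω : Type*} {m m0 : MeasurableSpace Ω} {μ : Measure Ω}

theorem tendsto_stoppedProcess {β : Type*} [TopologicalSpace β] {u : ℕ → Ω → β} {τ : Ω → ℕ∞}
    {ω : Ω} (hω : τ ω ≠ ⊤) :
    Tendsto (stoppedProcess u τ · ω) atTop (𝓝 (stoppedValue u τ ω)) := by
  obtain ⟨k, hk⟩ := WithTop.ne_top_iff_exists.1 hω
  exact tendsto_atTop_of_eventually_const (i₀ := k) fun n hn =>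
    stoppedProcess_eq_of_ge (hk ▸ WithTop.coe_le_coe.2 hn)

theorem stoppedValue_stoppedProcess_add_one {β : Type*} {u : ℕ → Ω → β} {σ τ : Ω → ℕ∞}
    {ω : Ω} (h : σ ω < τ ω) :
    stoppedValue (stoppedProcess u τ) (fun ω => (σ ω + 1 : ℕ∞)) ω = u ((σ ω).untopA + 1) ω := by
  obtain ⟨k, hk⟩ := WithTop.ne_top_iff_exists.1 h.ne_top
  have h_le : σ ω + 1 ≤ τ ω := hk ▸ Order.add_one_le_of_lt (hk ▸ h)
  refine (stoppedValue_stoppedProcess_apply (ω := ω) ?_).trans ?_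
  · exact hk ▸ WithTop.coe_ne_top
  · exact (congrArg (fun k : ℕ∞ => u k.untopA ω) (min_eq_left h_le)).trans (hk ▸ rfl)

variable [IsFiniteMeasure μ]

theorem ae_eq_of_ae_eq_condExp_of_map_eq {Y Z : Ω → ℤ} (hm : m ≤ m0) (hY : Measurable[m] Y)
    (hZ : Measurable Z) (hZ_int : Integrable (fun ω => (Z ω : ℝ)) μ)
    (hYZ : (fun ω => (Y ω : ℝ)) =ᵐ[μ] μ[fun ω => (Z ω : ℝ) | m]) (hlaw : μ.map Y = μ.map Z) :
    Y =ᵐ[μ] Z := by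
  have h_level : ∀ a : ℤ, ∀ᵐ ω ∂μ, Y ω = a → Z ω = a := by
    intro a
    set dY : Ω → ℝ := fun ω => |(Y ω : ℝ) - a|
    set dZ : Ω → ℝ := fun ω => |(Z ω : ℝ) - a|
    have hdZ_int : Integrable dZ μ := (hZ_int.sub (integrable_const _)).abs
    have hdY_int : Integrable dY μ :=
      ((integrable_condExp.congr hYZ.symm).sub (integrable_const _)).abs
    have h_shift : (fun ω => (Y ω : ℝ) - a) =ᵐ[μ] μ[fun ω => (Z ω : ℝ) - a | m] := by
      filter_upwards [hYZ, condExp_sub hZ_int (integrable_const (a : ℝ)) m] with ω h1 h2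
      change _ = μ[(fun ω => (Z ω : ℝ)) - fun _ => (a : ℝ) | m] ω
      rw [h2, Pi.sub_apply, condExp_const hm, ← h1]
    have h_jensen : dY ≤ᵐ[μ] μ[dZ | m] := by
      filter_upwards [h_shift, abs_condExp_ae_le_condExp_abs (m := m) (μ := μ)
        (fun ω => (Z ω : ℝ) - a)] with ω h1 h2
      change |μ[fun ω => (Z ω : ℝ) - a | m] ω| ≤ μ[dZ | m] ω at h2
      rwa [← h1] at h2
    have h_mean : ∫ ω, dY ω ∂μ = ∫ ω, μ[dZ | m] ω ∂μ := by
      rw [integral_condExp hm]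
      have hf : Measurable fun z : ℤ => |(z : ℝ) - a| := measurable_from_top
      rw [← integral_map (hY.mono hm le_rfl).aemeasurable hf.aestronglyMeasurable,
        hlaw, integral_map hZ.aemeasurable hf.aestronglyMeasurable]
    have h_eq : dY =ᵐ[μ] μ[dZ | m] :=
      (integral_eq_iff_of_ae_le hdY_int integrable_condExp h_jensen).1 h_mean
    have hA : MeasurableSet[m] {ω | Y ω = a} := hY (measurableSet_singleton a)
    have h_zero : ∫ ω in {ω | Y ω = a}, dZ ω ∂μ = 0 := by
      rw [← setIntegral_condExp hm hdZ_int hA, ← setIntegral_congr_ae (hm _ hA)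
        (h_eq.mono fun ω h _ => h)]
      exact setIntegral_eq_zero_of_forall_eq_zero fun ω (hω : Y ω = a) => by simp [dY, hω]
    rw [setIntegral_eq_zero_iff_of_nonneg_ae (.of_forall fun ω => abs_nonneg _)
      hdZ_int.integrableOn, EventuallyEq, ae_restrict_iff' (hm _ hA)] at h_zero
    filter_upwards [h_zero] with ω hω hYa
    simpa [dZ, sub_eq_zero] using hω hYa
  filter_upwards [ae_all_iff.2 h_level] with ω hω
  exact (hω (Y ω) rfl).symm

variable {ℱ : Filtration ℕ m0} {f : ℕ → Ω → ℝ} {g : Ω → ℝ}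

theorem Submartingale.limitProcess_ae_eq_of_tendsto_ae (hf : Submartingale f ℱ μ)
    (hui : UniformIntegrable f 1 μ) (hlim : ∀ᵐ ω ∂μ, Tendsto (f · ω) atTop (𝓝 (g ω))) :
    ℱ.limitProcess f μ =ᵐ[μ] g := by
  filter_upwards [hf.ae_tendsto_limitProcess_of_uniformIntegrable hui, hlim]
    with ω h1 h2
  exact tendsto_nhds_unique h1 h2

theorem Submartingale.integrable_of_tendsto_ae (hf : Submartingale f ℱ μ)
    (hui : UniformIntegrable f 1 μ) (hlim : ∀ᵐ ω ∂μ, Tendsto (f · ω) atTop (𝓝 (g ω))) :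
    Integrable g μ :=
  let ⟨_, hR⟩ := hui.2.2
  ((hf.memLp_limitProcess hR).integrable le_rfl).congr
    (hf.limitProcess_ae_eq_of_tendsto_ae hui hlim)

theorem Martingale.ae_eq_condExp_of_tendsto_ae (hf : Martingale f ℱ μ)
    (hui : UniformIntegrable f 1 μ) (hlim : ∀ᵐ ω ∂μ, Tendsto (f · ω) atTop (𝓝 (g ω))) (n : ℕ) :
    f n =ᵐ[μ] μ[g | ℱ n] :=
  (hf.ae_eq_condExp_limitProcess hui n).trans
    (condExp_congr_ae (hf.submartingale.limitProcess_ae_eq_of_tendsto_ae hui hlim))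

variable {ρ : Ω → ℕ∞}

theorem Martingale.stoppedValue_ae_eq_condExp_of_ae_eq_condExp (hf : Martingale f ℱ μ)
    (hfg : ∀ n, f n =ᵐ[μ] μ[g | ℱ n]) (hρ : IsStoppingTime ℱ ρ) (hρ_fin : ∀ᵐ ω ∂μ, ρ ω ≠ ⊤) :
    stoppedValue f ρ =ᵐ[μ] μ[g | hρ.measurableSpace] := by
  -- sample at the bounded time `ρ ∧ n`, whose σ-algebra agrees with `𝓕_ρ` on `{ρ ≤ n}`
  have h_le : ∀ n : ℕ, ∀ᵐ ω ∂μ, ρ ω ≤ n → stoppedValue f ρ ω = μ[g | hρ.measurableSpace] ω := by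
    intro n
    have h_trunc : stoppedValue f (fun ω => min (ρ ω) n) =ᵐ[μ]
        μ[g | (hρ.min_const n).measurableSpace] :=
      (hf.stoppedValue_ae_eq_condExp_of_le_const (hρ.min_const n) fun _ => min_le_right _ _).trans
        ((condExp_congr_ae (hfg n)).trans
          (condExp_condExp_of_le ((hρ.min_const n).measurableSpace_le_of_le_const
            fun _ => min_le_right _ _) (ℱ.le n)))
    have h_restrict := condExp_min_stopping_time_ae_eq_restrict_le_const (μ := μ) (f := g) hρ n
    rw [EventuallyEq, ae_restrict_iff' (ℱ.le n _ (hρ n))] at h_restrict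
    filter_upwards [h_trunc, h_restrict] with ω h1 h2 hω
    rw [← h2 hω, ← h1]
    exact congrArg (fun k : ℕ∞ => f k.untopA ω) (min_eq_left hω).symm
  filter_upwards [ae_all_iff.2 h_le, hρ_fin] with ω hω hfin
  obtain ⟨n, hn⟩ := WithTop.ne_top_iff_exists.1 hfin
  exact hω n hn.symm.le

variable {τ : Ω → ℕ∞}

theorem Martingale.stoppedValue_stoppedProcess_ae_eq_condExp
    (hM : Martingale (stoppedProcess f τ) ℱ μ) (hui : UniformIntegrable (stoppedProcess f τ) 1 μ)
    (hτ : ∀ᵐ ω ∂μ, τ ω ≠ ⊤) (hρ : IsStoppingTime ℱ ρ) (hρ_fin : ∀ᵐ ω ∂μ, ρ ω ≠ ⊤) :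
    stoppedValue (stoppedProcess f τ) ρ =ᵐ[μ] μ[stoppedValue f τ | hρ.measurableSpace] :=
  hM.stoppedValue_ae_eq_condExp_of_ae_eq_condExp
    (hM.ae_eq_condExp_of_tendsto_ae hui (hτ.mono fun _ => tendsto_stoppedProcess)) hρ hρ_fin

theorem Martingale.stoppedValue_ae_eq_condExp_of_uniformIntegrable
    (hM : Martingale (stoppedProcess f τ) ℱ μ) (hui : UniformIntegrable (stoppedProcess f τ) 1 μ)
    (hτ : ∀ᵐ ω ∂μ, τ ω ≠ ⊤) (hρ : IsStoppingTime ℱ ρ) (hρτ : ∀ᵐ ω ∂μ, ρ ω ≤ τ ω) :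
    stoppedValue f ρ =ᵐ[μ] μ[stoppedValue f τ | hρ.measurableSpace] := by
  have hρ_fin : ∀ᵐ ω ∂μ, ρ ω ≠ ⊤ := by
    filter_upwards [hρτ, hτ] with ω h1 h2 using ne_top_of_le_ne_top h2 h1
  refine EventuallyEq.trans ?_ (hM.stoppedValue_stoppedProcess_ae_eq_condExp hui hτ hρ hρ_fin)
  filter_upwards [hρτ, hρ_fin] with ω h1 h2
  exact ((stoppedValue_stoppedProcess_apply h2).trans
    (congrArg (fun k : ℕ∞ => f k.untopA ω) (min_eq_left h1))).symm

section IntegerValued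

variable {u : ℕ → Ω → ℤ} {σ : Ω → ℕ∞}

theorem stoppedValue_ae_eq_of_map_eq (hu : StronglyAdapted ℱ u)
    (hM : Martingale (stoppedProcess (fun n ω => (u n ω : ℝ)) τ) ℱ μ)
    (hui : UniformIntegrable (stoppedProcess (fun n ω => (u n ω : ℝ)) τ) 1 μ)
    (hτ : IsStoppingTime ℱ τ) (hτ_fin : ∀ᵐ ω ∂μ, τ ω ≠ ⊤) (hσ : IsStoppingTime ℱ σ)
    (hστ : ∀ᵐ ω ∂μ, σ ω ≤ τ ω) (hlaw : μ.map (stoppedValue u σ) = μ.map (stoppedValue u τ)) :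
    stoppedValue u σ =ᵐ[μ] stoppedValue u τ :=
  have h_prog := hu.isStronglyProgressive_of_discrete
  ae_eq_of_ae_eq_condExp_of_map_eq hσ.measurableSpace_le (measurable_stoppedValue h_prog hσ)
    ((measurable_stoppedValue h_prog hτ).mono hτ.measurableSpace_le le_rfl)
    (hM.submartingale.integrable_of_tendsto_ae hui (hτ_fin.mono fun _ => tendsto_stoppedProcess))
    (hM.stoppedValue_ae_eq_condExp_of_uniformIntegrable hui hτ_fin hσ hστ) hlaw

theorem ae_eq_of_stoppedValue_ae_eq (hu : StronglyAdapted ℱ u)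
    (hM : Martingale (stoppedProcess (fun n ω => (u n ω : ℝ)) τ) ℱ μ)
    (hui : UniformIntegrable (stoppedProcess (fun n ω => (u n ω : ℝ)) τ) 1 μ)
    (hτ_fin : ∀ᵐ ω ∂μ, τ ω ≠ ⊤) (hσ : IsStoppingTime ℱ σ) (hστ : ∀ᵐ ω ∂μ, σ ω ≤ τ ω)
    (hu_step : ∀ᵐ ω ∂μ, ∀ n, u (n + 1) ω ≠ u n ω)
    (h_val : stoppedValue u σ =ᵐ[μ] stoppedValue u τ) :
    σ =ᵐ[μ] τ := by
  set X : ℕ → Ω → ℝ := fun n ω => u n ω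
  have hσ_fin : ∀ᵐ ω ∂μ, σ ω ≠ ⊤ := by
    filter_upwards [hστ, hτ_fin] with ω h1 h2 using ne_top_of_le_ne_top h2 h1
  have h_val' : stoppedValue X σ =ᵐ[μ] stoppedValue X τ := h_val.fun_comp (fun z : ℤ => (z : ℝ))
  have hρ : IsStoppingTime ℱ (fun ω => (σ ω + 1 : ℕ∞)) := hσ.add_const' 1
  have hσρ : hσ.measurableSpace ≤ hρ.measurableSpace :=
    hσ.measurableSpace_mono hρ fun ω => show σ ω ≤ σ ω + 1 from le_self_add
  have hXσ_meas : StronglyMeasurable[hρ.measurableSpace] (stoppedValue X σ) :=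
    ((measurable_from_top (f := fun z : ℤ => (z : ℝ))).comp
      ((measurable_stoppedValue hu.isStronglyProgressive_of_discrete hσ).mono hσρ le_rfl)
      ).stronglyMeasurable
  have hXσ_int : Integrable (stoppedValue X σ) μ :=
    (hM.submartingale.integrable_of_tendsto_ae hui
      (hτ_fin.mono fun _ => tendsto_stoppedProcess)).congr h_val'.symm
  have h_next : stoppedValue (stoppedProcess X τ) (fun ω => (σ ω + 1 : ℕ∞)) =ᵐ[μ]
      stoppedValue X σ :=
    calc _ =ᵐ[μ] μ[stoppedValue X τ | hρ.measurableSpace] :=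
          hM.stoppedValue_stoppedProcess_ae_eq_condExp hui hτ_fin hρ
            (hσ_fin.mono fun _ h => WithTop.add_ne_top.2 ⟨h, WithTop.one_ne_top⟩)
      _ =ᵐ[μ] μ[stoppedValue X σ | hρ.measurableSpace] := condExp_congr_ae h_val'.symm
      _ = stoppedValue X σ := condExp_of_stronglyMeasurable hρ.measurableSpace_le hXσ_meas hXσ_int
  filter_upwards [h_next, hστ, hu_step] with ω h_eq h_le h_step
  by_contra h_ne
  have h_eq' := (stoppedValue_stoppedProcess_add_one (lt_of_le_of_ne h_le h_ne)).symm.trans h_eq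
  exact h_step _ (Int.cast_injective h_eq')

end IntegerValued

end MeasureTheory

namespace RWSkorokhod

variable {Ω : Type*}

lemma walk_succ (ξ : ℕ → Ω → ℤ) (n : ℕ) (ω : Ω) :
    walk ξ (n + 1) ω = walk ξ n ω + ξ (n + 1) ω := by
  rw [walk, walk, Finset.sum_Icc_succ_top (by omega)]

lemma stopProc_eq_stoppedProcess (ξ : ℕ → Ω → ℤ) (τ : Ω → ℕ∞) :
    stopProc ξ τ = stoppedProcess (fun n ω => (walk ξ n ω : ℝ)) τ := by
  funext n ω
  rcases le_total (n : ℕ∞) (τ ω) with h | h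
  · rw [stoppedProcess_eq_of_le h, stopProc, min_eq_left h, ENat.toNat_natCast]
  · obtain ⟨k, hk⟩ := WithTop.ne_top_iff_exists.1 (ne_top_of_le_ne_top (ENat.natCast_ne_top n) h)
    rw [stoppedProcess_eq_of_ge h, stopProc, min_eq_right h, ← hk]
    rfl

lemma stopVal_eq_stoppedValue {ξ : ℕ → Ω → ℤ} {τ : Ω → ℕ∞} {ω : Ω} (hω : τ ω ≠ ⊤) :
    stopVal ξ τ ω = stoppedValue (walk ξ) τ ω := by
  obtain ⟨k, hk⟩ := WithTop.ne_top_iff_exists.1 hω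
  simp only [stopVal, stoppedValue, ← hk]
  rfl

lemma stronglyAdapted_walk [MeasurableSpace Ω] {ξ : ℕ → Ω → ℤ} (hm : ∀ k, Measurable (ξ k)) :
    StronglyAdapted (natFilt ξ hm) (walk ξ) := fun n =>
  (Measurable.of_comap_le (le_biSup (fun k => MeasurableSpace.comap (walk ξ k) inferInstance)
    (Set.mem_Iic.2 le_rfl : n ∈ Set.Iic n))).stronglyMeasurable

lemma IsSSRW.ae_step [MeasurableSpace Ω] {P : Measure Ω} {ξ : ℕ → Ω → ℤ} (W : IsSSRW P ξ) :
    ∀ᵐ ω ∂P, ∀ k, ξ k ω = 1 ∨ ξ k ω = -1 := by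
  have := W.isProb
  refine ae_all_iff.2 fun k => ?_
  have h_up : MeasurableSet {ω | ξ k ω = 1} := W.meas k (measurableSet_singleton 1)
  have h_down : MeasurableSet {ω | ξ k ω = -1} := W.meas k (measurableSet_singleton (-1))
  have h_disj : Disjoint {ω | ξ k ω = 1} {ω | ξ k ω = -1} :=
    Set.disjoint_left.2 fun ω (h1 : ξ k ω = 1) (h2 : ξ k ω = -1) => by omega
  have h_full : P ({ω | ξ k ω = 1} ∪ {ω | ξ k ω = -1}) = P univ := by
    rw [measure_union h_disj h_down, W.up, W.down, ENNReal.add_halves, measure_univ]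
  exact (ae_iff_measure_eq (h_up.union h_down).nullMeasurableSet).2 h_full

lemma IsSSRW.ae_walk_succ_ne [MeasurableSpace Ω] {P : Measure Ω} {ξ : ℕ → Ω → ℤ}
    (W : IsSSRW P ξ) : ∀ᵐ ω ∂P, ∀ n, walk ξ (n + 1) ω ≠ walk ξ n ω := by
  filter_upwards [W.ae_step] with ω h n
  rw [walk_succ]
  rcases h (n + 1) with h | h <;> omega

/-- Any UI stopping time of the natural filtration of the simple
symmetric random walk is minimal. -/
theorem minimal_of_uiStop
    {Ω : Type*} [MeasurableSpace Ω] (P : Measure Ω) (ξ : ℕ → Ω → ℤ)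
    (W : IsSSRW P ξ) (τ : Ω → ℕ∞) (hτ : IsUIStop P ξ W.meas τ) :
    Minimal P ξ W.meas τ := by
  intro σ hσ hστ hlaw
  have := W.isProb
  obtain ⟨hτ_stop, hτ_fin, hM, hui⟩ := hτ
  rw [stopProc_eq_stoppedProcess] at hM hui
  have hτ_fin : ∀ᵐ ω ∂P, τ ω ≠ ⊤ := hτ_fin.mono fun _ => LT.lt.ne_top
  have hσ_fin : ∀ᵐ ω ∂P, σ ω ≠ ⊤ := by
    filter_upwards [hστ, hτ_fin] with ω h1 h2 using ne_top_of_le_ne_top h2 h1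
  rw [Measure.map_congr (hσ_fin.mono fun _ => stopVal_eq_stoppedValue),
    Measure.map_congr (hτ_fin.mono fun _ => stopVal_eq_stoppedValue)] at hlaw
  have hu := stronglyAdapted_walk W.meas
  exact ae_eq_of_stoppedValue_ae_eq hu hM hui hτ_fin hσ hστ W.ae_walk_succ_ne
    (stoppedValue_ae_eq_of_map_eq hu hM hui hτ_stop hτ_fin hσ hστ hlaw)

end RWSkorokhod
end
end
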